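/- arXiv:2403.08275 — 2 statements merged into one kernel-verified Lean document; each statement's English description precedes it below -/
import Mathlib

section
/- Suppose the grid function u^{n+1} ∈ ℓ²(ℤ) satisfies the implicit relation u^{n+1} = B - Δt·𝔻^α(D u^{n+1}) for some B ∈ ℓ²(ℤ). Then ‖B‖² = ‖u^{n+1}‖² + Δt²·‖𝔻^α(D u^{n+1})‖², where ‖·‖ is the scaled ℓ² norm. In particular ‖u^{n+1}‖ ≤ ‖B‖. -/
/-!
Write `B = u + Δt w` with `w = 𝔻^α (D u)`; the identity is Pythagoras once `∑ u_j w_j = 0`.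
In convolution form `𝔻^α v_j = c ∑_m (v_{j-m} - v_j) K(m)` with an even kernel `K ∈ ℓ¹`, so Fubini
gives `∑ u_j w_j = c ∑_m K(m) (A(m) - A(0))`, where `A(m) = ∑_j u_j (D u)_{j-m}` is the
cross-correlation of `u` and `D u`. As `D u` is a difference of two shifts of `u` and the
autocorrelation of `u` is even, `A` is odd, so `A(0) = 0` and `K · A` sums to zero.
-/

/-- Discrete fractional Laplacian. -/
noncomputable def fracLap (cα α dx : ℝ) (u : ℤ → ℝ) (j : ℤ) : ℝ :=
  (cα / dx ^ α) * ∑' k : {k : ℤ // k ≠ j},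
    (u k - u j) * (1 - (-1 : ℝ) ^ (j - (k : ℤ))) / ((|(k : ℤ) - j| : ℤ) : ℝ) ^ (1 + α)

/-- Central difference operator. -/
noncomputable def Dc (dx : ℝ) (v : ℤ → ℝ) (j : ℤ) : ℝ := (v (j + 1) - v (j - 1)) / (2 * dx)

lemma Function.Odd.tsum_eq_zero {α β : Type*} [InvolutiveNeg α] [AddCommGroup β]
    [IsAddTorsionFree β] [TopologicalSpace β] [IsTopologicalAddGroup β] [T2Space β]
    {f : α → β} (hf : f.Odd) : ∑' a, f a = 0 := by
  rw [← neg_eq_self, ← tsum_neg, ← (Equiv.neg α).tsum_eq]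
  exact tsum_congr fun a => by rw [Equiv.neg_apply, hf, neg_neg]

lemma Summable.comp_sub_right {G β : Type*} [AddGroup G] [AddCommMonoid β] [TopologicalSpace β]
    {f : G → β} (hf : Summable f) (g : G) : Summable fun x => f (x - g) :=
  (Equiv.subRight g).summable_iff.mpr hf

lemma tsum_comp_sub_right {G β : Type*} [AddGroup G] [AddCommMonoid β] [TopologicalSpace β]
    (f : G → β) (g : G) : ∑' x, f (x - g) = ∑' x, f x :=
  (Equiv.subRight g).tsum_eq f

section SquareSummable

variable {ι : Type*} {f g : ι → ℝ}

lemma Memℓp.summable_sq (hf : Memℓp f 2) : Summable fun i => f i ^ 2 := by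
  simpa using hf.summable (by norm_num)

lemma summable_mul_of_summable_sq (hf : Summable fun i => f i ^ 2)
    (hg : Summable fun i => g i ^ 2) : Summable fun i => f i * g i :=
  .of_norm_bounded ((hf.add hg).div_const 2) fun i => by
    rw [Real.norm_eq_abs, abs_mul]
    nlinarith [sq_abs (f i), sq_abs (g i), sq_nonneg (|f i| - |g i|)]

lemma summable_sq_sub (hf : Summable fun i => f i ^ 2) (hg : Summable fun i => g i ^ 2) :
    Summable fun i => (f i - g i) ^ 2 :=
  .of_nonneg_of_le (fun _ => sq_nonneg _) (fun i => by nlinarith [sq_nonneg (f i + g i)])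
    ((hf.add hg).mul_left 2)

lemma tsum_sq_add_mul_of_tsum_mul_eq_zero {u w : ι → ℝ} (c : ℝ)
    (hu : Summable fun i => u i ^ 2) (hw : Summable fun i => w i ^ 2)
    (horth : ∑' i, u i * w i = 0) :
    ∑' i, (u i + c * w i) ^ 2 = ∑' i, u i ^ 2 + c ^ 2 * ∑' i, w i ^ 2 := by
  have h := hu.hasSum.add
    (((summable_mul_of_summable_sq hu hw).hasSum.mul_left (2 * c)).add (hw.hasSum.mul_left (c ^ 2)))
  calc ∑' i, (u i + c * w i) ^ 2
      = ∑' i, (u i ^ 2 + (2 * c * (u i * w i) + c ^ 2 * w i ^ 2)) :=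
        tsum_congr fun i => by ring
    _ = ∑' i, u i ^ 2 + c ^ 2 * ∑' i, w i ^ 2 := by rw [h.tsum_eq, horth]; ring

end SquareSummable

lemma summable_sq_Dc {u : ℤ → ℝ} (hu : Summable fun j => u j ^ 2) (dx : ℝ) :
    Summable fun j => Dc dx u j ^ 2 := by
  refine ((summable_sq_sub (hu.comp_sub_right (-1)) (hu.comp_sub_right 1)).div_const
    ((2 * dx) ^ 2)).congr fun j => ?_
  rw [Dc, div_pow, sub_neg_eq_add]

noncomputable def fracLapKernel (α : ℝ) (m : ℤ) : ℝ :=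
  if m = 0 then 0 else (1 - (-1 : ℝ) ^ m) / ((|m| : ℤ) : ℝ) ^ (1 + α)

lemma fracLapKernel_even (α : ℝ) : (fracLapKernel α).Even := by
  intro m
  simp only [fracLapKernel, neg_eq_zero, abs_neg, zpow_neg, neg_one_zpow_eq_ite]
  split_ifs <;> norm_num

lemma abs_fracLapKernel_le (α : ℝ) (m : ℤ) :
    |fracLapKernel α m| ≤ 2 * |(m : ℝ)| ^ (-(1 + α)) := by
  rw [fracLapKernel]
  split_ifs with hm
  · rw [abs_zero]; positivity
  · have hpos : 0 < |(m : ℝ)| := by positivity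
    rw [abs_div, Int.cast_abs, abs_of_pos (Real.rpow_pos_of_pos hpos _),
      Real.rpow_neg hpos.le, div_eq_mul_inv]
    gcongr
    calc |1 - (-1 : ℝ) ^ m| ≤ |1| + |(-1 : ℝ) ^ m| := abs_sub _ _
      _ = 2 := by rw [abs_one, abs_neg_one_zpow]; norm_num

lemma summable_abs_fracLapKernel {α : ℝ} (hα : 0 < α) :
    Summable fun m => |fracLapKernel α m| :=
  .of_nonneg_of_le (fun _ => abs_nonneg _) (abs_fracLapKernel_le α)
    ((Real.summable_abs_int_rpow (by linarith)).mul_left 2)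

lemma fracLap_eq_tsum_fracLapKernel (cα α dx : ℝ) (v : ℤ → ℝ) (j : ℤ) :
    fracLap cα α dx v j = cα / dx ^ α * ∑' m, (v (j - m) - v j) * fracLapKernel α m := by
  rw [fracLap, ← (Equiv.subLeft j).tsum_eq,
    ← tsum_subtype_eq_of_support_subset (s := {k | k ≠ j})]
  · refine congrArg _ (tsum_congr fun ⟨k, hk⟩ => ?_)
    rw [Equiv.subLeft_apply, sub_sub_cancel, fracLapKernel, if_neg (sub_ne_zero.mpr hk.symm),
      abs_sub_comm, mul_div_assoc]
  · rintro k hk rfl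
    simp [fracLapKernel] at hk

noncomputable def crossCorr (u v : ℤ → ℝ) (m : ℤ) : ℝ := ∑' j, u j * v (j - m)

lemma crossCorr_self_even (u : ℤ → ℝ) : (crossCorr u u).Even := by
  intro m
  rw [crossCorr, crossCorr, ← tsum_comp_sub_right _ m]
  exact tsum_congr fun j => by rw [sub_neg_eq_add, sub_add_cancel, mul_comm]

lemma crossCorr_Dc {u : ℤ → ℝ} (hu : Summable fun j => u j ^ 2) (dx : ℝ) (m : ℤ) :
    crossCorr u (Dc dx u) m = (crossCorr u u (m - 1) - crossCorr u u (m + 1)) / (2 * dx) := by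
  have hcorr (p : ℤ) : Summable fun j => u j * u (j - p) :=
    summable_mul_of_summable_sq hu (hu.comp_sub_right p)
  rw [crossCorr, crossCorr, crossCorr, ← (hcorr _).tsum_sub (hcorr _), ← tsum_div_const]
  refine tsum_congr fun j => ?_
  rw [Dc, show j - m + 1 = j - (m - 1) by ring, show j - m - 1 = j - (m + 1) by ring]
  ring

lemma crossCorr_Dc_odd {u : ℤ → ℝ} (hu : Summable fun j => u j ^ 2) (dx : ℝ) :
    (crossCorr u (Dc dx u)).Odd := by
  intro m
  have heven := crossCorr_self_even u
  rw [crossCorr_Dc hu, crossCorr_Dc hu, ← heven (-m - 1), ← heven (-m + 1)]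
  ring_nf

lemma tsum_mul_sub_shift_eq_crossCorr_sub {u v : ℤ → ℝ} (hu : Summable fun j => u j ^ 2)
    (hv : Summable fun j => v j ^ 2) (m : ℤ) :
    ∑' j, u j * (v (j - m) - v j) = crossCorr u v m - crossCorr u v 0 := by
  have hcorr (p : ℤ) : Summable fun j => u j * v (j - p) :=
    summable_mul_of_summable_sq hu (hv.comp_sub_right p)
  rw [crossCorr, crossCorr, ← (hcorr m).tsum_sub (hcorr 0)]
  simp only [sub_zero, mul_sub]

lemma summable_uncurry_mul_of_tsum_abs_le {α β : Type*} {k : α → ℝ} {g : α → β → ℝ} {C : ℝ}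
    (hk : Summable fun a => |k a|) (hg : ∀ a, Summable fun b => |g a b|)
    (hC : ∀ a, ∑' b, |g a b| ≤ C) :
    Summable fun p : α × β => k p.1 * g p.1 p.2 := by
  refine .of_abs ((summable_prod_of_nonneg fun _ => abs_nonneg _).mpr ⟨fun a => ?_, ?_⟩)
  · simpa only [abs_mul] using (hg a).mul_left |k a|
  · refine .of_nonneg_of_le (fun _ => tsum_nonneg fun _ => abs_nonneg _) (fun a => ?_)
      (hk.mul_right C)
    simp only [abs_mul, tsum_mul_left]
    exact mul_le_mul_of_nonneg_left (hC a) (abs_nonneg _)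

lemma abs_mul_sub_le (a b c : ℝ) : |a * (b - c)| ≤ a ^ 2 + (b ^ 2 + c ^ 2) / 2 := by
  rw [abs_le]
  constructor <;>
    nlinarith [sq_nonneg (a + b), sq_nonneg (a - b), sq_nonneg (a + c), sq_nonneg (a - c)]

lemma tsum_mul_tsum_shift_sub_mul_comm {u v k : ℤ → ℝ} (hu : Summable fun j => u j ^ 2)
    (hv : Summable fun j => v j ^ 2) (hk : Summable fun m => |k m|) :
    ∑' j, u j * ∑' m, (v (j - m) - v j) * k m = ∑' m, k m * ∑' j, u j * (v (j - m) - v j) := by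
  have hbound (m : ℤ) : Summable fun j => u j ^ 2 + (v (j - m) ^ 2 + v j ^ 2) / 2 :=
    hu.add (((hv.comp_sub_right m).add hv).div_const 2)
  have hg (m : ℤ) : Summable fun j => |u j * (v (j - m) - v j)| :=
    .of_nonneg_of_le (fun _ => abs_nonneg _) (fun j => abs_mul_sub_le _ _ _) (hbound m)
  have hC (m : ℤ) : ∑' j, |u j * (v (j - m) - v j)| ≤ ∑' j, u j ^ 2 + ∑' j, v j ^ 2 := by
    calc ∑' j, |u j * (v (j - m) - v j)|
        ≤ ∑' j, (u j ^ 2 + (v (j - m) ^ 2 + v j ^ 2) / 2) :=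
          (hg m).tsum_le_tsum (fun j => abs_mul_sub_le _ _ _) (hbound m)
      _ = ∑' j, u j ^ 2 + ∑' j, v j ^ 2 := by
        rw [hu.tsum_add (((hv.comp_sub_right m).add hv).div_const 2), tsum_div_const,
          (hv.comp_sub_right m).tsum_add hv, tsum_comp_sub_right (fun j => v j ^ 2)]
        ring
  have hF := summable_uncurry_mul_of_tsum_abs_le hk hg hC
  calc ∑' j, u j * ∑' m, (v (j - m) - v j) * k m
      = ∑' j, ∑' m, k m * (u j * (v (j - m) - v j)) := by
        refine tsum_congr fun j => ?_
        rw [← tsum_mul_left]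
        exact tsum_congr fun m => by ring
    _ = ∑' m, k m * ∑' j, u j * (v (j - m) - v j) := by
        rw [Summable.tsum_comm hF]
        exact tsum_congr fun m => tsum_mul_left

theorem tsum_mul_fracLap_Dc_self_eq_zero (cα : ℝ) {α : ℝ} (hα : 0 < α) (dx : ℝ) {u : ℤ → ℝ}
    (hu : Summable fun j => u j ^ 2) :
    ∑' j, u j * fracLap cα α dx (Dc dx u) j = 0 := by
  have hodd := crossCorr_Dc_odd hu dx
  calc ∑' j, u j * fracLap cα α dx (Dc dx u) j
      = cα / dx ^ α * ∑' j, u j * ∑' m, (Dc dx u (j - m) - Dc dx u j) * fracLapKernel α m := by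
        rw [← tsum_mul_left]
        refine tsum_congr fun j => ?_
        rw [fracLap_eq_tsum_fracLapKernel]
        ring
    _ = cα / dx ^ α * ∑' m, fracLapKernel α m * crossCorr u (Dc dx u) m := by
        simp only [tsum_mul_tsum_shift_sub_mul_comm hu (summable_sq_Dc hu dx)
          (summable_abs_fracLapKernel hα), tsum_mul_sub_shift_eq_crossCorr_sub hu
          (summable_sq_Dc hu dx), hodd.map_zero, sub_zero]
    _ = 0 := by
        rw [show ∑' m, fracLapKernel α m * crossCorr u (Dc dx u) m = 0 from
          ((fracLapKernel_even α).mul_odd hodd).tsum_eq_zero, mul_zero]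

theorem implicit_step_energy_general (cα α dx dt : ℝ)
    (hα : α ∈ Set.Ico (1 : ℝ) 2) (hdx : 0 < dx) (hdt : 0 < dt)
    (u B : ℤ → ℝ) (hu : Memℓp u 2) (hB : Memℓp B 2)
    (hscheme : ∀ j : ℤ, u j = B j - dt * fracLap cα α dx (Dc dx u) j) :
    dx * ∑' j : ℤ, (B j) ^ 2 =
        dx * ∑' j : ℤ, (u j) ^ 2 + dt ^ 2 * (dx * ∑' j : ℤ, (fracLap cα α dx (Dc dx u) j) ^ 2) ∧
      Real.sqrt (dx * ∑' j : ℤ, (u j) ^ 2) ≤ Real.sqrt (dx * ∑' j : ℤ, (B j) ^ 2) := by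
  set w := fracLap cα α dx (Dc dx u)
  obtain rfl : B = fun j => u j + dt * w j := funext fun j => by linarith [hscheme j]
  have hw : Summable fun j => w j ^ 2 :=
    ((summable_sq_sub hB.summable_sq hu.summable_sq).div_const (dt ^ 2)).congr fun j => by
      field_simp [hdt.ne']
      ring
  have henergy : ∑' j, (u j + dt * w j) ^ 2 = ∑' j, u j ^ 2 + dt ^ 2 * ∑' j, w j ^ 2 :=
    tsum_sq_add_mul_of_tsum_mul_eq_zero dt hu.summable_sq hw
      (tsum_mul_fracLap_Dc_self_eq_zero cα (by linarith [hα.1]) dx hu.summable_sq)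
  refine ⟨by rw [henergy]; ring, Real.sqrt_le_sqrt ?_⟩
  rw [henergy]
  exact mul_le_mul_of_nonneg_left (le_add_of_nonneg_right (by positivity)) hdx.le

/-- For the implicit relation u = B - Δt·𝔻^α(Du):
‖B‖² = ‖u‖² + Δt²‖𝔻^α(Du)‖², and in particular ‖u‖ ≤ ‖B‖. -/
theorem implicit_step_energy (cα α dx dt : ℝ) (hcα : 0 < cα)
    (hα : α ∈ Set.Ico (1 : ℝ) 2) (hdx : 0 < dx) (hdt : 0 < dt)
    (u B : ℤ → ℝ) (hu : Memℓp u 2) (hB : Memℓp B 2)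
    (hscheme : ∀ j : ℤ, u j = B j - dt * fracLap cα α dx (Dc dx u) j) :
    dx * ∑' j : ℤ, (B j) ^ 2 =
        dx * ∑' j : ℤ, (u j) ^ 2 + dt ^ 2 * (dx * ∑' j : ℤ, (fracLap cα α dx (Dc dx u) j) ^ 2) ∧
      Real.sqrt (dx * ∑' j : ℤ, (u j) ^ 2) ≤ Real.sqrt (dx * ∑' j : ℤ, (B j) ^ 2) :=
  implicit_step_energy_general cα α dx dt hα hdx hdt u B hu hB hscheme
end

section
/- The Crank-Nicolson scheme u^{n+1} = u^n - Δt·ũ^{n+1/2}·D u^{n+1/2} - Δt·𝔻^α(D u^{n+1/2}), with u^{n+1/2} = (u^n + u^{n+1})/2 and ũ(j) = (u(j+1)+u(j)+u(j-1))/3, is L²-conservative: any solution u^{n+1} ∈ ℓ²(ℤ) satisfies ‖u^{n+1}‖ = ‖u^n‖ in the scaled ℓ² norm. -/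
/-- Three-point average ũ(j) = (u(j+1)+u(j)+u(j-1))/3. -/
noncomputable def tilde (u : ℤ → ℝ) (j : ℤ) : ℝ := (u (j + 1) + u j + u (j - 1)) / 3

/-!
Multiplying the scheme by the midpoint `w = (uⁿ + uⁿ⁺¹)/2` and summing gives
`(‖uⁿ⁺¹‖² - ‖uⁿ‖²)/2 = -Δt (⟨w̃ · Dw, w⟩ + ⟨𝔻^α(Dw), w⟩)`, and both pairings vanish for every
`w ∈ ℓ²(ℤ)`. The convective one telescopes, since `3 w_j w̃_j (w_{j+1} - w_{j-1}) = F_j - F_{j-1}`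
with `F_j = w_j w_{j+1} (w_j + w_{j+1})`. The dispersive one is a multiple of
`⟨K ∗ Dw, w⟩ - ⟨Dw, w⟩ ∑ K` for the even, summable kernel `K` of `𝔻^α`; the second term vanishes
because `D` is skew, and the first because `K ∗ ·` commutes with `D` and is symmetric.
-/

section SquareSummable

variable {ι : Type*}

theorem abs_mul_le_add_sq_div_two (x y : ℝ) : |x * y| ≤ (x ^ 2 + y ^ 2) / 2 := by
  rw [abs_mul]
  nlinarith [sq_nonneg (|x| - |y|), sq_abs x, sq_abs y]

theorem Memℓp.summable_sq_s15 {u : ι → ℝ} (hu : Memℓp u 2) : Summable fun j => u j ^ 2 := by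
  simpa [Real.norm_eq_abs, sq_abs] using hu.summable (by norm_num)

theorem summable_mul_of_summable_sq_s15 {a b : ι → ℝ} (ha : Summable fun j => a j ^ 2)
    (hb : Summable fun j => b j ^ 2) : Summable fun j => a j * b j :=
  .of_norm_bounded ((ha.add hb).div_const 2) fun j => abs_mul_le_add_sq_div_two (a j) (b j)

theorem summable_sq_mul_add_mul {a b : ι → ℝ} (ha : Summable fun j => a j ^ 2)
    (hb : Summable fun j => b j ^ 2) (c d : ℝ) :
    Summable fun j => (c * a j + d * b j) ^ 2 :=
  .of_nonneg_of_le (fun _ => sq_nonneg _)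
    (fun j => by nlinarith [sq_nonneg (c * a j - d * b j)])
    (((ha.mul_left (c ^ 2)).add (hb.mul_left (d ^ 2))).mul_left 2)

theorem abs_le_sqrt_tsum_sq {w : ι → ℝ} (hw : Summable fun j => w j ^ 2) (j : ι) :
    |w j| ≤ √(∑' i, w i ^ 2) := by
  rw [← Real.sqrt_sq_eq_abs]
  exact Real.sqrt_le_sqrt (hw.le_tsum j fun i _ => sq_nonneg _)

end SquareSummable

theorem Summable.comp_add_int {f : ℤ → ℝ} (hf : Summable f) (c : ℤ) :
    Summable fun j => f (j + c) :=
  (Equiv.addRight c).summable_iff.mpr hf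

theorem Summable.comp_sub_int {f : ℤ → ℝ} (hf : Summable f) (c : ℤ) :
    Summable fun j => f (j - c) :=
  (Equiv.subRight c).summable_iff.mpr hf

theorem hasSum_sub_comp_sub_one {f : ℤ → ℝ} (hf : Summable f) :
    HasSum (fun j => f j - f (j - 1)) 0 := by
  have hshift : HasSum (fun j => f (j - 1)) (∑' j, f j) :=
    (Equiv.subRight (1 : ℤ)).hasSum_iff.mpr hf.hasSum
  simpa using hf.hasSum.sub hshift

section CentralDifference

variable {w : ℤ → ℝ}

theorem summable_sq_dc (hw : Summable fun j => w j ^ 2) (dx : ℝ) :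
    Summable fun j => Dc dx w j ^ 2 :=
  (summable_sq_mul_add_mul (hw.comp_add_int 1) (hw.comp_sub_int 1)
    (1 / (2 * dx)) (-(1 / (2 * dx)))).congr fun j => by simp only [Dc]; ring

theorem hasSum_mul_dc_self (hw : Summable fun j => w j ^ 2) (dx : ℝ) :
    HasSum (fun j => w j * Dc dx w j) 0 := by
  have hF : Summable fun j => w j * w (j + 1) :=
    summable_mul_of_summable_sq_s15 hw (hw.comp_add_int 1)
  simpa using ((hasSum_sub_comp_sub_one hF).div_const (2 * dx)).congr_fun fun j => by
    simp only [Dc, sub_add_cancel]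
    ring

theorem summable_mul_mul_add_shift (hw : Summable fun j => w j ^ 2) :
    Summable fun j => w j * w (j + 1) * (w j + w (j + 1)) := by
  set M := √(∑' i, w i ^ 2)
  refine .of_norm_bounded ((hw.add (hw.comp_add_int 1)).mul_left M) fun j => ?_
  have hsum : |w j + w (j + 1)| ≤ 2 * M := by
    linarith [abs_add_le (w j) (w (j + 1)), abs_le_sqrt_tsum_sq hw j,
      abs_le_sqrt_tsum_sq hw (j + 1)]
  rw [Real.norm_eq_abs, abs_mul]
  calc |w j * w (j + 1)| * |w j + w (j + 1)|
      ≤ (w j ^ 2 + w (j + 1) ^ 2) / 2 * (2 * M) :=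
        mul_le_mul (abs_mul_le_add_sq_div_two _ _) hsum (abs_nonneg _) (by positivity)
    _ = M * (w j ^ 2 + w (j + 1) ^ 2) := by ring

theorem hasSum_mul_tilde_mul_dc (hw : Summable fun j => w j ^ 2) (dx : ℝ) :
    HasSum (fun j => w j * (tilde w j * Dc dx w j)) 0 := by
  have h := (hasSum_sub_comp_sub_one (summable_mul_mul_add_shift hw)).div_const (6 * dx)
  simpa using h.congr_fun fun j => by
    simp only [tilde, Dc, sub_add_cancel]
    ring

end CentralDifference

noncomputable def fracKernel (α : ℝ) (m : ℤ) : ℝ :=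
  (1 - (-1 : ℝ) ^ m) / ((|m| : ℤ) : ℝ) ^ (1 + α)

theorem fracKernel_neg (α : ℝ) (m : ℤ) : fracKernel α (-m) = fracKernel α m := by
  rw [fracKernel, fracKernel, abs_neg, zpow_neg, ← inv_zpow, inv_neg_one]

theorem fracLap_eq_tsum_fracKernel (cα α dx : ℝ) (u : ℤ → ℝ) (j : ℤ) :
    fracLap cα α dx u j = cα / dx ^ α * ∑' k, (u k - u j) * fracKernel α (j - k) := by
  rw [fracLap, ← tsum_subtype_eq_of_support_subset (s := {k | k ≠ j})]
  · congr 1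
    refine tsum_congr fun k => ?_
    rw [fracKernel, abs_sub_comm, mul_div_assoc]
  · intro k hk hkj
    simp [show k = j by simpa using hkj] at hk

theorem abs_fracKernel_le (α : ℝ) (m : ℤ) :
    |fracKernel α m| ≤ 2 * |(m : ℝ)| ^ (-(1 + α)) := by
  have hnum : |1 - (-1 : ℝ) ^ m| ≤ 2 := by
    rcases Int.even_or_odd m with hm | hm <;> norm_num [hm.neg_one_zpow]
  have hden : 0 ≤ |(m : ℝ)| ^ (1 + α) := Real.rpow_nonneg (abs_nonneg _) _
  rw [fracKernel, abs_div, Int.cast_abs, abs_of_nonneg hden, Real.rpow_neg (abs_nonneg _),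
    ← div_eq_mul_inv]
  exact div_le_div_of_nonneg_right hnum hden

theorem summable_abs_fracKernel {α : ℝ} (hα : 0 < α) : Summable fun m => |fracKernel α m| :=
  .of_nonneg_of_le (fun _ => abs_nonneg _) (abs_fracKernel_le α)
    ((Real.summable_abs_int_rpow (by linarith)).mul_left 2)

section ConvolutionKernel

variable {κ : ℤ → ℝ}

theorem hasSum_mul_kernel_sub {h : ℤ → ℝ} (hh : Summable fun j => |h j|)
    (hκ : Summable fun m => |κ m|) :
    HasSum (fun p : ℤ × ℤ => h p.1 * κ (p.1 - p.2)) ((∑' j, h j) * ∑' m, κ m) := by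
  simp only [← Real.norm_eq_abs] at hh hκ
  let shear : ℤ × ℤ ≃ ℤ × ℤ := Equiv.prodShear (Equiv.refl ℤ) Equiv.subLeft
  rw [← shear.hasSum_iff, tsum_mul_tsum_of_summable_norm hh hκ]
  refine (summable_mul_of_summable_norm hh hκ).hasSum.congr_fun fun q => ?_
  simp [shear]

theorem summable_mul_mul_kernel_sub {a b : ℤ → ℝ} (ha : Summable fun j => a j ^ 2)
    (hb : Summable fun j => b j ^ 2) (hκ : Summable fun m => |κ m|) :
    Summable fun p : ℤ × ℤ => a p.1 * b p.2 * κ (p.1 - p.2) := by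
  have hκneg : Summable fun m => |κ (-m)| := (Equiv.neg ℤ).summable_iff.mpr hκ
  have hA : Summable fun p : ℤ × ℤ => a p.1 ^ 2 * |κ (p.1 - p.2)| :=
    (hasSum_mul_kernel_sub ha.abs hκ.abs).summable
  have hB : Summable fun p : ℤ × ℤ => b p.2 ^ 2 * |κ (p.1 - p.2)| := by
    refine (Equiv.prodComm ℤ ℤ).summable_iff.mp
      ((hasSum_mul_kernel_sub hb.abs hκneg.abs).summable.congr fun p => ?_)
    simp
  refine .of_norm_bounded ((hA.add hB).div_const 2) fun p => ?_
  rw [Real.norm_eq_abs, abs_mul]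
  nlinarith [mul_le_mul_of_nonneg_right (abs_mul_le_add_sq_div_two (a p.1) (b p.2))
    (abs_nonneg (κ (p.1 - p.2)))]

theorem tsum_mul_comp_add_mul_kernel_sub (a b : ℤ → ℝ) (κ : ℤ → ℝ) (c : ℤ) :
    ∑' p : ℤ × ℤ, a p.1 * b (p.2 + c) * κ (p.1 - p.2)
      = ∑' p : ℤ × ℤ, a p.1 * b p.2 * κ (p.1 - p.2 + c) := by
  rw [← (Equiv.prodCongr (Equiv.refl ℤ) (Equiv.subRight c)).tsum_eq]
  refine tsum_congr fun p => ?_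
  simp only [Equiv.prodCongr_apply, Equiv.coe_refl, Equiv.subRight_apply, Prod.map_fst,
    Prod.map_snd, id_eq, sub_add_cancel, sub_sub_eq_add_sub, add_sub_right_comm]

theorem tsum_mul_mul_kernel_sub_swap (hκ : ∀ m, κ (-m) = κ m) (a b : ℤ → ℝ) (c : ℤ) :
    ∑' p : ℤ × ℤ, a p.1 * b p.2 * κ (p.1 - p.2 + c)
      = ∑' p : ℤ × ℤ, b p.1 * a p.2 * κ (p.1 - p.2 - c) := by
  rw [← (Equiv.prodComm ℤ ℤ).tsum_eq]
  refine tsum_congr fun p => ?_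
  rw [← hκ]
  simp only [Equiv.prodComm_apply, Prod.fst_swap, Prod.snd_swap, neg_add, neg_sub]
  ring_nf

end ConvolutionKernel

section Dispersion

variable {w : ℤ → ℝ}

theorem hasSum_mul_dc_mul_kernel_sub {κ : ℤ → ℝ} (hκ_neg : ∀ m, κ (-m) = κ m)
    (hκ : Summable fun m => |κ m|) (hw : Summable fun j => w j ^ 2) (dx : ℝ) :
    HasSum (fun p : ℤ × ℤ => w p.1 * Dc dx w p.2 * κ (p.1 - p.2)) 0 := by
  have hfwd : Summable fun p : ℤ × ℤ => w p.1 * w (p.2 + 1) * κ (p.1 - p.2) :=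
    summable_mul_mul_kernel_sub (b := fun j => w (j + 1)) hw (hw.comp_add_int 1) hκ
  have hbwd : Summable fun p : ℤ × ℤ => w p.1 * w (p.2 + -1) * κ (p.1 - p.2) :=
    summable_mul_mul_kernel_sub (b := fun j => w (j + -1)) hw (hw.comp_add_int (-1)) hκ
  have hsplit : (fun p : ℤ × ℤ => w p.1 * Dc dx w p.2 * κ (p.1 - p.2)) = fun p =>
      (w p.1 * w (p.2 + 1) * κ (p.1 - p.2) - w p.1 * w (p.2 + -1) * κ (p.1 - p.2)) / (2 * dx) := by
    funext p
    simp only [Dc, ← sub_eq_add_neg]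
    ring
  rw [(summable_mul_mul_kernel_sub hw (summable_sq_dc hw dx) hκ).hasSum_iff, hsplit,
    tsum_div_const, hfwd.tsum_sub hbwd, tsum_mul_comp_add_mul_kernel_sub,
    tsum_mul_comp_add_mul_kernel_sub, tsum_mul_mul_kernel_sub_swap hκ_neg w w (-1)]
  simp only [sub_neg_eq_add, sub_self, zero_div]

theorem hasSum_mul_fracLap_dc {α : ℝ} (hα : 0 < α) (cα dx : ℝ) (hw : Summable fun j => w j ^ 2) :
    HasSum (fun j => w j * fracLap cα α dx (Dc dx w) j) 0 := by
  set g := Dc dx w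
  have hK := summable_abs_fracKernel hα
  have hoff : HasSum (fun p : ℤ × ℤ => w p.1 * g p.2 * fracKernel α (p.1 - p.2)) 0 :=
    hasSum_mul_dc_mul_kernel_sub (fracKernel_neg α) hK hw dx
  have hdiag : HasSum (fun p : ℤ × ℤ => w p.1 * g p.1 * fracKernel α (p.1 - p.2)) 0 := by
    have h := hasSum_mul_kernel_sub (h := fun j => w j * g j)
      (summable_mul_of_summable_sq_s15 hw (summable_sq_dc hw dx)).abs hK
    rwa [(hasSum_mul_dc_self hw dx).tsum_eq, zero_mul] at h
  have hH : HasSum (fun p : ℤ × ℤ => w p.1 * ((g p.2 - g p.1) * fracKernel α (p.1 - p.2))) 0 := by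
    simpa using (hoff.sub hdiag).congr_fun fun p => by ring
  have h := (hH.prod_fiberwise fun j => (hH.summable.prod_factor j).hasSum).mul_left (cα / dx ^ α)
  rw [mul_zero] at h
  refine h.congr_fun fun j => ?_
  simp only [fracLap_eq_tsum_fracKernel, tsum_mul_left]
  ring

end Dispersion

theorem crank_nicolson_L2_conservative_general (cα α dx dt : ℝ)
    (hα : α ∈ Set.Ico (1 : ℝ) 2)
    (un un1 : ℤ → ℝ) (hun : Memℓp un 2) (hun1 : Memℓp un1 2)
    (hscheme : ∀ j : ℤ,
      un1 j = un j
        - dt * (tilde (fun i => (un i + un1 i) / 2) j * Dc dx (fun i => (un i + un1 i) / 2) j)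
        - dt * fracLap cα α dx (Dc dx (fun i => (un i + un1 i) / 2)) j) :
    Real.sqrt (dx * ∑' j : ℤ, (un1 j) ^ 2) = Real.sqrt (dx * ∑' j : ℤ, (un j) ^ 2) := by
  have hw : Summable fun j => ((un j + un1 j) / 2) ^ 2 :=
    (summable_sq_mul_add_mul hun.summable_sq_s15 hun1.summable_sq_s15 (1 / 2) (1 / 2)).congr
      fun j => by ring
  have hconv := hasSum_mul_tilde_mul_dc hw dx
  have hdisp := hasSum_mul_fracLap_dc (by linarith [hα.1]) cα dx hw
  have henergy : HasSum (fun j => un1 j ^ 2 - un j ^ 2) 0 := by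
    have h := (hconv.add hdisp).mul_left (-2 * dt)
    rw [add_zero, mul_zero] at h
    refine h.congr_fun fun j => ?_
    linear_combination (un j + un1 j) * hscheme j
  have hdiff := (hun1.summable_sq_s15.hasSum.sub hun.summable_sq_s15.hasSum).unique henergy
  rw [sub_eq_zero.mp hdiff]

/-- The Crank-Nicolson scheme is L²-conservative: ‖u^{n+1}‖ = ‖u^n‖. -/
theorem crank_nicolson_L2_conservative (cα α dx dt : ℝ) (hcα : 0 < cα)
    (hα : α ∈ Set.Ico (1 : ℝ) 2) (hdx : 0 < dx) (hdt : 0 < dt)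
    (un un1 : ℤ → ℝ) (hun : Memℓp un 2) (hun1 : Memℓp un1 2)
    (hscheme : ∀ j : ℤ,
      un1 j = un j
        - dt * (tilde (fun i => (un i + un1 i) / 2) j * Dc dx (fun i => (un i + un1 i) / 2) j)
        - dt * fracLap cα α dx (Dc dx (fun i => (un i + un1 i) / 2)) j) :
    Real.sqrt (dx * ∑' j : ℤ, (un1 j) ^ 2) = Real.sqrt (dx * ∑' j : ℤ, (un j) ^ 2) :=
  crank_nicolson_L2_conservative_general cα α dx dt hα un un1 hun hun1 hscheme
end
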